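/- arXiv:2602.00861 — 2 statements merged into one kernel-verified Lean document; each statement's English description precedes it below -/
import Mathlib

section
/- For every player i and every parameter profile w, the partial gradient of the private cost C_i with respect to the i-th block equals π_i times the partial gradient of the potential Φ with respect to the i-th block: ∇_i C_i(w) = π_i • ∇_i Φ(w). (This is the weighted-potential-game identity of Theorem 2.1 for MultiHeadCE.) -/
open scoped BigOperators

/-- Private cost of player `i` in the MultiHeadCE game:
`C_i(w) = π_i · D(w) + (α/2)·‖w_i‖²`. -/
noncomputable def privateCost {H : ℕ} {E : Fin H → Type*}
    [∀ i, NormedAddCommGroup (E i)] [∀ i, InnerProductSpace ℝ (E i)]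
    (π : Fin H → ℝ) (α : ℝ) (D : (∀ i, E i) → ℝ) (i : Fin H)
    (w : ∀ i, E i) : ℝ :=
  π i * D w + (α / 2) * ‖w i‖ ^ 2

/-- Potential of the MultiHeadCE game:
`Φ(w) = D(w) + (α/2)·Σ_i (1/π_i)·‖w_i‖²`. -/
noncomputable def potential {H : ℕ} {E : Fin H → Type*}
    [∀ i, NormedAddCommGroup (E i)] [∀ i, InnerProductSpace ℝ (E i)]
    (π : Fin H → ℝ) (α : ℝ) (D : (∀ i, E i) → ℝ)
    (w : ∀ i, E i) : ℝ :=
  D w + (α / 2) * ∑ i, (1 / π i) * ‖w i‖ ^ 2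

section Aux

variable {F : Type*} [NormedAddCommGroup F] [InnerProductSpace ℝ F] [CompleteSpace F]

/-- Gradient of the squared norm. -/
lemma hasGradientAt_normSq (x : F) :
    HasGradientAt (fun θ : F => ‖θ‖ ^ 2) ((2 : ℝ) • x) x := by
  rw [hasGradientAt_iff_hasFDerivAt]
  have h := (hasFDerivAt_id x).inner ℝ (hasFDerivAt_id x)
  have hfun : (fun θ : F => ‖θ‖ ^ 2) = fun θ : F => (inner ℝ θ θ : ℝ) := by
    funext θ
    rw [real_inner_self_eq_norm_sq]
  rw [hfun]
  refine h.congr_fderiv ?_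
  ext y
  simp [fderivInnerCLM_apply, InnerProductSpace.toDual_apply_apply, inner_smul_left,
    real_inner_comm x y]
  ring

/-- Linear combination rule for gradients. -/
lemma HasGradientAt.comb {f g : F → ℝ} {gf gg : F} {x : F}
    (hf : HasGradientAt f gf x) (hg : HasGradientAt g gg x) (a b : ℝ) :
    HasGradientAt (fun θ => a * f θ + b * g θ) (a • gf + b • gg) x := by
  rw [hasGradientAt_iff_hasFDerivAt] at *
  have h := (hf.const_mul a).add (hg.const_mul b)
  convert h using 1
  all_goals try rfl
  ext y
  simp [InnerProductSpace.toDual_apply_apply, inner_add_left, inner_smul_left]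

/-- Adding a constant does not change the gradient. -/
lemma HasGradientAt.add_const {f : F → ℝ} {gf : F} {x : F}
    (hf : HasGradientAt f gf x) (c : ℝ) :
    HasGradientAt (fun θ => f θ + c) gf x := by
  rw [hasGradientAt_iff_hasFDerivAt] at *
  exact hf.add_const c

end Aux

/-- Weighted-potential-game identity: `∇_i C_i(w) = π_i • ∇_i Φ(w)` for every
player `i` and profile `w`. -/
theorem gradient_privateCost_eq_smul_gradient_potential
    {H : ℕ} (hH : 1 ≤ H) (E : Fin H → Type*)
    [∀ i, NormedAddCommGroup (E i)] [∀ i, InnerProductSpace ℝ (E i)]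
    [∀ i, FiniteDimensional ℝ (E i)]
    (D : (∀ i, E i) → ℝ) (hD : Differentiable ℝ D)
    (α : ℝ) (hα : 0 ≤ α)
    (π : Fin H → ℝ) (hπ : ∀ i, 0 < π i) (hπsum : ∑ i, π i = 1) :
    ∀ (i : Fin H) (w : ∀ i, E i),
      gradient (fun θ : E i => privateCost π α D i (Function.update w i θ)) (w i)
        = π i • gradient (fun θ : E i => potential π α D (Function.update w i θ)) (w i) := by
  intro i w
  -- Differentiability of θ ↦ D (update w i θ)
  have hu : ∀ θ : E i, HasFDerivAt (Function.update w i)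
      (ContinuousLinearMap.pi (Pi.single i (ContinuousLinearMap.id ℝ (E i)))) θ :=
    fun θ => hasFDerivAt_update w θ
  have hDu : DifferentiableAt ℝ (fun θ : E i => D (Function.update w i θ)) (w i) :=
    (hD _).comp _ (hu (w i)).differentiableAt
  set g : E i := gradient (fun θ : E i => D (Function.update w i θ)) (w i) with hg_def
  have hg : HasGradientAt (fun θ : E i => D (Function.update w i θ)) g (w i) :=
    hDu.hasGradientAt
  have hsq : HasGradientAt (fun θ : E i => ‖θ‖ ^ 2) ((2 : ℝ) • w i) (w i) :=
    hasGradientAt_normSq (w i)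
  -- Gradient of the private cost map
  have hC : HasGradientAt (fun θ : E i => privateCost π α D i (Function.update w i θ))
      (π i • g + (α / 2) • ((2 : ℝ) • w i)) (w i) := by
    have := hg.comb hsq (π i) (α / 2)
    apply this.congr_of_eventuallyEq
    filter_upwards with θ
    simp [privateCost, Function.update_self]
  -- Rewrite the potential composed with the update
  set K : ℝ := ∑ j ∈ Finset.univ.erase i, (1 / π j) * ‖w j‖ ^ 2 with hK_def
  have hpot_eq : ∀ θ : E i, potential π α D (Function.update w i θ)
      = 1 * D (Function.update w i θ) + (α / 2 * (1 / π i)) * ‖θ‖ ^ 2 + (α / 2) * K := by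
    intro θ
    have hsum : (∑ j, (1 / π j) * ‖Function.update w i θ j‖ ^ 2)
        = (1 / π i) * ‖θ‖ ^ 2 + K := by
      rw [← Finset.add_sum_erase _ _ (Finset.mem_univ i), Function.update_self, hK_def]
      congr 1
      apply Finset.sum_congr rfl
      intro j hj
      rw [Function.update_of_ne (Finset.ne_of_mem_erase hj)]
    simp only [potential, hsum]
    ring
  have hΦ : HasGradientAt (fun θ : E i => potential π α D (Function.update w i θ))
      ((1 : ℝ) • g + (α / 2 * (1 / π i)) • ((2 : ℝ) • w i)) (w i) := by
    have := (hg.comb hsq 1 (α / 2 * (1 / π i))).add_const ((α / 2) * K)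
    apply this.congr_of_eventuallyEq
    filter_upwards with θ
    rw [hpot_eq θ]
  rw [hC.gradient, hΦ.gradient]
  have hπi := (hπ i).ne'
  rw [smul_add, smul_smul, smul_smul, smul_smul, smul_smul]
  rw [mul_one]
  congr 1
  field_simp
end

section
/- Every critical point of the potential is a first-order Nash equilibrium of the private costs: if w ∈ W satisfies ∇_i Φ(w) = 0 for every i ∈ {1,…,H}, then for every i the partial gradient of player i's own private cost vanishes, ∇_i C_i(w) = 0; i.e., no player has a first-order unilateral descent direction. (Second claim of Theorem 2.1.) -/
open scoped BigOperators

/-- Every critical point of the potential `Φ` is a first-order Nash equilibrium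
of the private costs: if all partial gradients of `Φ` vanish at `w`, then each
player's partial gradient of their own private cost vanishes at `w`. -/
theorem isFirstOrderNash_of_critical_potential
    {H : ℕ} (hH : 1 ≤ H) (E : Fin H → Type*)
    [∀ i, NormedAddCommGroup (E i)] [∀ i, InnerProductSpace ℝ (E i)]
    [∀ i, FiniteDimensional ℝ (E i)]
    (D : (∀ i, E i) → ℝ) (hD : Differentiable ℝ D)
    (α : ℝ) (hα : 0 ≤ α)
    (π : Fin H → ℝ) (hπ : ∀ i, 0 < π i) (hπsum : ∑ i, π i = 1)
    (w : ∀ i, E i)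
    (hcrit : ∀ i : Fin H,
      gradient (fun θ : E i => potential π α D (Function.update w i θ)) (w i) = 0) :
    ∀ i : Fin H,
      gradient (fun θ : E i => privateCost π α D i (Function.update w i θ)) (w i) = 0 := by
  intro i
  set Φb : E i → ℝ := fun θ => potential π α D (Function.update w i θ) with hΦbdef
  set c : ℝ := -(π i * ((α / 2) * ∑ j ∈ Finset.univ.erase i, (1 / π j) * ‖w j‖ ^ 2)) with hc
  have hsum : ∀ θ : E i, ∑ j, (1 / π j) * ‖Function.update w i θ j‖ ^ 2
      = (1 / π i) * ‖θ‖ ^ 2 + ∑ j ∈ Finset.univ.erase i, (1 / π j) * ‖w j‖ ^ 2 := by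
    intro θ
    rw [← Finset.add_sum_erase _ _ (Finset.mem_univ i)]
    congr 1
    · simp
    · exact Finset.sum_congr rfl fun j hj => by
        rw [Function.update_of_ne (Finset.ne_of_mem_erase hj)]
  have key : (fun θ : E i => privateCost π α D i (Function.update w i θ))
      = fun θ => π i * Φb θ + c := by
    funext θ
    have hπi := (hπ i).ne'
    simp only [privateCost, potential, hΦbdef, hc, Function.update_self, hsum θ]
    field_simp
    ring
  have hΦdiff : Differentiable ℝ Φb := by
    have h1 : Differentiable ℝ (fun θ : E i => D (Function.update w i θ)) := fun θ =>
      (hD _).comp θ ((hasFDerivAt_update w θ).differentiableAt)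
    have h2 : Differentiable ℝ (fun θ : E i => ∑ j, (1 / π j) * ‖Function.update w i θ j‖ ^ 2) := by
      have h : Differentiable ℝ (fun θ : E i =>
          (1 / π i) * ‖θ‖ ^ 2 + ∑ j ∈ Finset.univ.erase i, (1 / π j) * ‖w j‖ ^ 2) :=
        (((contDiff_norm_sq ℝ (E := E i)).differentiable one_ne_zero).const_mul _).add_const _
      have : (fun θ : E i => ∑ j, (1 / π j) * ‖Function.update w i θ j‖ ^ 2)
          = fun θ => (1 / π i) * ‖θ‖ ^ 2 + ∑ j ∈ Finset.univ.erase i, (1 / π j) * ‖w j‖ ^ 2 :=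
        funext hsum
      rw [this]; exact h
    exact h1.add (h2.const_mul _)
  rw [key]
  unfold gradient
  rw [fderiv_add_const, fderiv_const_mul (hΦdiff (w i))]
  have := hcrit i
  unfold gradient at this
  simp only [map_smulₛₗ, RingHom.id_apply, starRingEnd_apply, star_trivial]
  rw [show (InnerProductSpace.toDual ℝ (E i)).symm (fderiv ℝ Φb (w i)) = 0 from this, smul_zero]
end
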